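/- With b := J(s_b), let I₁ : [b, ∞) → [s_b, ∞) be the inverse of the restriction of J to [s_b, ∞), and let I₂ : [b, ∞) → (0, s_b] be the inverse of the restriction of J to (0, s_b]. Then there exist constants C > 0 and R ≥ b such that for all x ≥ R: |I₁(x) − x/c1| ≤ C and |x^θ·I₂(x) − c0^θ| ≤ C·x^{−θ}. In particular I₁(x)/x → 1/c1 and x^θ·I₂(x) → c0^θ as x → +∞. -/
import Mathlib


/-- The map `J(s; c0, c1) = (c1*s + c0) * ((s+1)/s)^(1/θ)` for real `s`,
using the real power of the positive quantity `(s+1)/s`. -/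
noncomputable def Jmap (θ c0 c1 s : ℝ) : ℝ :=
  (c1 * s + c0) * ((s + 1) / s) ^ (1 / θ)

/-- `s_b = (1−θ)/(2θ) + (1/(2θ))·√(4θ·(c0/c1) + (1−θ)²)`. -/
noncomputable def sB (θ r : ℝ) : ℝ :=
  (1 - θ) / (2 * θ) + 1 / (2 * θ) * Real.sqrt (4 * θ * r + (1 - θ) ^ 2)

set_option maxHeartbeats 4000000

lemma exp_le_one_add_mul (t : ℝ) : Real.exp t ≤ 1 + t * Real.exp t := by
  have h := Real.add_one_le_exp (-t)
  rw [Real.exp_neg] at h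
  have he : 0 < Real.exp t := Real.exp_pos t
  have h2 : (Real.exp t)⁻¹ * Real.exp t = 1 := inv_mul_cancel₀ he.ne'
  nlinarith

lemma rpow_one_add_le' (α u U : ℝ) (hα : 0 < α) (hu : 0 ≤ u) (huU : u ≤ U) :
    (1 + u) ^ α ≤ 1 + α * Real.exp (α * U) * u := by
  have h1 : (0:ℝ) < 1 + u := by linarith
  rw [Real.rpow_def_of_pos h1]
  have hlog : Real.log (1 + u) ≤ u := by
    have := Real.log_le_sub_one_of_pos h1; linarith
  have hlog0 : 0 ≤ Real.log (1 + u) := Real.log_nonneg (by linarith)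
  have h2 : Real.exp (Real.log (1+u) * α) ≤ Real.exp (α * u) := by
    apply Real.exp_le_exp.mpr; nlinarith
  have h3 : Real.exp (α * u) ≤ 1 + (α*u) * Real.exp (α*u) := exp_le_one_add_mul _
  have h4 : Real.exp (α*u) ≤ Real.exp (α*U) := Real.exp_le_exp.mpr (by nlinarith)
  have h5 : (α*u) * Real.exp (α*u) ≤ (α*u) * Real.exp (α*U) :=
    mul_le_mul_of_nonneg_left h4 (mul_nonneg hα.le hu)
  nlinarith

lemma sB_pos' (θ r : ℝ) (hθ : 0 < θ) (hr : 0 < r) : 0 < sB θ r := by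
  unfold sB
  set q := Real.sqrt (4*θ*r+(1-θ)^2) with hq
  have h1 : (1-θ)^2 < 4*θ*r + (1-θ)^2 := by nlinarith
  have h2 : |1-θ| < q := by
    rw [hq, ← Real.sqrt_sq_eq_abs]
    exact Real.sqrt_lt_sqrt (sq_nonneg _) h1
  have hqpos : 0 < (1-θ) + q := by nlinarith [neg_abs_le (1-θ)]
  have heq : (1-θ)/(2*θ) + 1/(2*θ)*q = ((1-θ)+q)/(2*θ) := by ring
  rw [heq]
  exact div_pos hqpos (by linarith)

lemma Jmap_pow' (θ c0 c1 s : ℝ) (hθ : 0 < θ) (hs : 0 < s) (hc : 0 ≤ c1*s + c0) :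
    (Jmap θ c0 c1 s) ^ θ = (c1*s + c0) ^ θ * ((s+1)/s) := by
  have hp : (0:ℝ) < (s+1)/s := div_pos (by linarith) hs
  unfold Jmap
  rw [Real.mul_rpow hc (Real.rpow_nonneg hp.le _), ← Real.rpow_mul hp.le,
    one_div, inv_mul_cancel₀ hθ.ne', Real.rpow_one]


/-- With `b := J(s_b)`, let `I₁ : [b, ∞) → [s_b, ∞)` and `I₂ : [b, ∞) → (0, s_b]`
be the inverses of the corresponding restrictions of `J`. Then there exist
`C > 0` and `R ≥ b` such that for all `x ≥ R`: `|I₁(x) − x/c1| ≤ C` and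
`|x^θ·I₂(x) − c0^θ| ≤ C·x^{−θ}`. In particular `I₁(x)/x → 1/c1` and
`x^θ·I₂(x) → c0^θ` as `x → +∞`. -/
theorem stmt7 (θ c0 c1 : ℝ) (hθ : 0 < θ) (hc1 : 0 < c1) (hc01 : c1 < c0)
    (I1 I2 : ℝ → ℝ)
    (hI1 : ∀ x, Jmap θ c0 c1 (sB θ (c0 / c1)) ≤ x →
      sB θ (c0 / c1) ≤ I1 x ∧ Jmap θ c0 c1 (I1 x) = x)
    (hI2 : ∀ x, Jmap θ c0 c1 (sB θ (c0 / c1)) ≤ x →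
      (0 < I2 x ∧ I2 x ≤ sB θ (c0 / c1)) ∧ Jmap θ c0 c1 (I2 x) = x) :
    (∃ C > 0, ∃ R, Jmap θ c0 c1 (sB θ (c0 / c1)) ≤ R ∧ ∀ x, R ≤ x →
      |I1 x - x / c1| ≤ C ∧ |x ^ θ * I2 x - c0 ^ θ| ≤ C * x ^ (-θ)) ∧
    Filter.Tendsto (fun x => I1 x / x) Filter.atTop (nhds (1 / c1)) ∧
    Filter.Tendsto (fun x => x ^ θ * I2 x) Filter.atTop (nhds (c0 ^ θ)) := by
  have hc0 : 0 < c0 := hc1.trans hc01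
  obtain ⟨sb, hsb_def⟩ : ∃ y : ℝ, y = sB θ (c0 / c1) := ⟨_, rfl⟩
  have hsb : 0 < sb := hsb_def ▸ sB_pos' θ _ hθ (div_pos hc0 hc1)
  obtain ⟨b, hb_def⟩ : ∃ y : ℝ, y = Jmap θ c0 c1 (sB θ (c0 / c1)) := ⟨_, rfl⟩
  rw [← hb_def] at hI1 hI2 ⊢
  rw [← hsb_def] at hI1 hI2
  obtain ⟨ε, hε_def⟩ : ∃ y : ℝ, y = Real.exp 1 := ⟨_, rfl⟩
  have hε : 0 < ε := hε_def ▸ Real.exp_pos 1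
  obtain ⟨D, hD_def⟩ : ∃ y : ℝ, y = c0 + ε * c1 / θ + ε * c0 := ⟨_, rfl⟩
  have hD : 0 < D := by rw [hD_def]; positivity
  obtain ⟨C1, hC1_def⟩ : ∃ y : ℝ, y = D / c1 := ⟨_, rfl⟩
  have hC1 : 0 < C1 := by rw [hC1_def]; positivity
  obtain ⟨K, hK_def⟩ : ∃ y : ℝ, y = θ * Real.exp (θ * (c1 * sb / c0)) := ⟨_, rfl⟩
  have hK : 0 < K := by rw [hK_def]; positivity
  have hc0θ : (0:ℝ) < c0 ^ θ := Real.rpow_pos_of_pos hc0 θ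
  obtain ⟨C2, hC2_def⟩ : ∃ y : ℝ, y = c0 ^ θ + c0 ^ θ * K * (c1 / c0) * (sb + 1) := ⟨_, rfl⟩
  have hC2 : 0 < C2 := by rw [hC2_def]; positivity
  obtain ⟨M, hM_def⟩ : ∃ y : ℝ, y = (c1 * sb + c0) ^ θ * (sb + 1) := ⟨_, rfl⟩
  have hMpos : 0 < M := by
    rw [hM_def]
    have : (0:ℝ) < c1 * sb + c0 := by positivity
    positivity
  obtain ⟨B, hB_def⟩ : ∃ y : ℝ, y = (c1 / θ + c0) * ((sb + 1) / sb) ^ (1 / θ) := ⟨_, rfl⟩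
  obtain ⟨C, hC_def⟩ : ∃ y : ℝ, y = C1 + C2 * M + 1 := ⟨_, rfl⟩
  have hC2M : 0 < C2 * M := mul_pos hC2 hMpos
  have hCpos : 0 < C := by rw [hC_def]; linarith
  obtain ⟨R, hR_def⟩ : ∃ y : ℝ, y = max b (max (B + 1) 1) := ⟨_, rfl⟩
  have hbR : b ≤ R := hR_def ▸ le_max_left _ _
  have key : ∀ x, R ≤ x →
      |I1 x - x / c1| ≤ C ∧ |x ^ θ * I2 x - c0 ^ θ| ≤ C * x ^ (-θ) := by
    intro x hx
    rw [hR_def] at hx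
    have hxb : b ≤ x := le_trans (le_max_left _ _) hx
    have hx1 : (1:ℝ) ≤ x := le_trans (le_trans (le_max_right _ _) (le_max_right _ _)) hx
    have hxB : B + 1 ≤ x := le_trans (le_trans (le_max_left _ _) (le_max_right _ _)) hx
    have hxpos : 0 < x := lt_of_lt_of_le one_pos hx1
    constructor
    · -- I1 bound
      obtain ⟨hs_lb, hJ1⟩ := hI1 x hxb
      obtain ⟨s, hs_def⟩ : ∃ y : ℝ, y = I1 x := ⟨_, rfl⟩
      rw [← hs_def] at hs_lb hJ1 ⊢
      have hs : 0 < s := lt_of_lt_of_le hsb hs_lb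
      obtain ⟨p, hp_def⟩ : ∃ y : ℝ, y = ((s + 1) / s) ^ (1 / θ) := ⟨_, rfl⟩
      have hxeq : x = (c1 * s + c0) * p := by rw [← hJ1, hp_def]; rfl
      have hppos : 0 < p := hp_def ▸ Real.rpow_pos_of_pos (div_pos (by linarith) hs) _
      have hp1 : 1 ≤ p := by
        have h1 : (1:ℝ) ≤ (s + 1) / s := (le_div_iff₀ hs).mpr (by linarith)
        rw [hp_def]
        calc (1:ℝ) = 1 ^ (1/θ) := (Real.one_rpow _).symm
          _ ≤ ((s + 1) / s) ^ (1 / θ) := Real.rpow_le_rpow zero_le_one h1 (by positivity)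
      have hcs : 0 < c1 * s + c0 := by positivity
      have hupper : s ≤ x / c1 := by
        rw [le_div_iff₀ hc1]
        nlinarith
      have hsθ : 1 / θ ≤ s := by
        by_contra hcon
        push_neg at hcon
        have hfrac : (s + 1) / s ≤ (sb + 1) / sb := by
          rw [div_le_div_iff₀ hs hsb]; nlinarith
        have hple : p ≤ ((sb + 1) / sb) ^ (1 / θ) := by
          rw [hp_def]
          exact Real.rpow_le_rpow (by positivity) hfrac (by positivity)
        have hxle : x ≤ B := by
          rw [hxeq, hB_def]
          have hcc : c1 * s + c0 ≤ c1 / θ + c0 := by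
            have h1 : c1 * s ≤ c1 / θ := by
              rw [div_eq_mul_inv, ← one_div]
              exact mul_le_mul_of_nonneg_left hcon.le hc1.le
            linarith
          apply mul_le_mul hcc hple hppos.le (by positivity)
        linarith
      have hus : 1 / s ≤ θ := by
        rw [div_le_iff₀ hs]
        rw [div_le_iff₀ hθ] at hsθ
        linarith [mul_comm θ s]
      have hple2 : p ≤ 1 + 1 / θ * ε * (1 / s) := by
        have hfeq : (s + 1) / s = 1 + 1 / s := by field_simp
        have h1 := rpow_one_add_le' (1/θ) (1/s) θ (by positivity) (by positivity) hus
        have h2 : Real.exp (1 / θ * θ) = ε := by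
          rw [hε_def, one_div, inv_mul_cancel₀ hθ.ne']
        rw [h2] at h1
        rw [hp_def, hfeq]
        exact h1
      have hstep : x ≤ (c1 * s + c0) * (1 + 1 / θ * ε * (1 / s)) := by
        rw [hxeq]
        exact mul_le_mul_of_nonneg_left hple2 hcs.le
      have hexp : (c1 * s + c0) * (1 + 1 / θ * ε * (1 / s))
          = c1 * s + c0 + ε * c1 / θ + (ε * c0 / θ) * (1 / s) := by
        field_simp
        ring
      have hlast : (ε * c0 / θ) * (1 / s) ≤ ε * c0 := by
        have h1 : (ε * c0 / θ) * (1 / s) ≤ (ε * c0 / θ) * θ :=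
          mul_le_mul_of_nonneg_left hus (by positivity)
        have h2 : (ε * c0 / θ) * θ = ε * c0 := by field_simp
        linarith
      have hxle2 : x ≤ c1 * s + D := by rw [hexp] at hstep; rw [hD_def]; linarith
      have hlower : x / c1 - s ≤ C1 := by
        have h1 : x / c1 ≤ (c1 * s + D) / c1 := by gcongr
        have heq2 : (c1 * s + D) / c1 = s + D / c1 := by field_simp
        rw [heq2] at h1
        rw [hC1_def]; linarith
      rw [abs_le]
      constructor
      · rw [hC_def]; linarith
      · rw [hC_def]; linarith
    · -- I2 bound
      obtain ⟨⟨hs0, hssb⟩, hJ2⟩ := hI2 x hxb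
      obtain ⟨s, hs_def⟩ : ∃ y : ℝ, y = I2 x := ⟨_, rfl⟩
      rw [← hs_def] at hs0 hssb hJ2 ⊢
      have hcs : (0:ℝ) ≤ c1 * s + c0 := by positivity
      have hpow : x ^ θ = (c1 * s + c0) ^ θ * ((s + 1) / s) := by
        rw [← hJ2]; exact Jmap_pow' θ c0 c1 s hθ hs0 hcs
      have hxθ : 0 < x ^ θ := Real.rpow_pos_of_pos hxpos θ
      have hg : x ^ θ * s = (c1 * s + c0) ^ θ * (s + 1) := by
        rw [hpow]; field_simp
      have hA : c0 ^ θ ≤ (c1 * s + c0) ^ θ :=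
        Real.rpow_le_rpow hc0.le (by nlinarith) hθ.le
      have hAnn : (0:ℝ) ≤ (c1 * s + c0) ^ θ := Real.rpow_nonneg hcs _
      have hg_lb : c0 ^ θ ≤ x ^ θ * s := by rw [hg]; nlinarith
      have hsplit : c1 * s + c0 = c0 * (1 + c1 * s / c0) := by field_simp; ring
      have huU : c1 * s / c0 ≤ c1 * sb / c0 := by gcongr
      have hub : (c1 * s + c0) ^ θ ≤ c0 ^ θ * (1 + K * (c1 * s / c0)) := by
        rw [hsplit, Real.mul_rpow hc0.le (by positivity)]
        apply mul_le_mul_of_nonneg_left _ hc0θ.le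
        have h1 := rpow_one_add_le' θ (c1 * s / c0) (c1 * sb / c0) hθ (by positivity) huU
        rw [hK_def]
        exact h1
      have hg_ub : x ^ θ * s ≤ c0 ^ θ + C2 * s := by
        rw [hg, hC2_def]
        have h1 : (c1 * s + c0) ^ θ * (s + 1)
            ≤ c0 ^ θ * (1 + K * (c1 * s / c0)) * (s + 1) :=
          mul_le_mul_of_nonneg_right hub (by linarith)
        have hexp2 : c0 ^ θ * (1 + K * (c1 * s / c0)) * (s + 1)
            = c0 ^ θ * (s + 1) + c0 ^ θ * K * (c1 / c0) * (s * (s + 1)) := by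
          field_simp
        have h2 : s * (s + 1) ≤ s * (sb + 1) := by nlinarith
        have h3 : c0 ^ θ * K * (c1 / c0) * (s * (s + 1))
            ≤ c0 ^ θ * K * (c1 / c0) * (s * (sb + 1)) :=
          mul_le_mul_of_nonneg_left h2 (by positivity)
        nlinarith
      have hgM : x ^ θ * s ≤ M := by
        rw [hg, hM_def]
        have hb1 : (c1 * s + c0) ^ θ ≤ (c1 * sb + c0) ^ θ :=
          Real.rpow_le_rpow hcs (by nlinarith [mul_le_mul_of_nonneg_left hssb hc1.le]) hθ.le
        apply mul_le_mul hb1 (by linarith) (by linarith)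
          (Real.rpow_nonneg (by positivity) _)
      have hxneg : x ^ (-θ) = (x ^ θ)⁻¹ := Real.rpow_neg hxpos.le θ
      have hsM : s ≤ M * x ^ (-θ) := by
        rw [hxneg, ← div_eq_mul_inv, le_div_iff₀ hxθ]
        linarith [hgM, mul_comm s (x ^ θ)]
      have habs : |x ^ θ * s - c0 ^ θ| = x ^ θ * s - c0 ^ θ :=
        abs_of_nonneg (by linarith)
      rw [habs]
      have hxnegpos : 0 < x ^ (-θ) := Real.rpow_pos_of_pos hxpos _
      have hfin : x ^ θ * s - c0 ^ θ ≤ C2 * (M * x ^ (-θ)) := by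
        have h4 := mul_le_mul_of_nonneg_left hsM hC2.le
        linarith
      calc x ^ θ * s - c0 ^ θ ≤ C2 * (M * x ^ (-θ)) := hfin
        _ = C2 * M * x ^ (-θ) := by ring
        _ ≤ C * x ^ (-θ) := by
            apply mul_le_mul_of_nonneg_right _ hxnegpos.le
            rw [hC_def]; linarith
  refine ⟨⟨C, hCpos, R, hbR, key⟩, ?_, ?_⟩
  · rw [← tendsto_sub_nhds_zero_iff]
    apply squeeze_zero_norm' (a := fun x => C * x⁻¹)
    · rw [Filter.eventually_atTop]
      refine ⟨max R 1, fun x hx => ?_⟩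
      have hxR : R ≤ x := le_trans (le_max_left _ _) hx
      have hx1 : (1:ℝ) ≤ x := le_trans (le_max_right _ _) hx
      have hxpos : 0 < x := lt_of_lt_of_le one_pos hx1
      have h := (key x hxR).1
      have hxne : x ≠ 0 := hxpos.ne'
      have hc1ne : c1 ≠ 0 := hc1.ne'
      have heq : I1 x / x - 1 / c1 = (I1 x - x / c1) / x := by
        rw [sub_div]
        congr 1
        rw [div_div, mul_comm c1 x, ← div_div, div_self hxne]
      rw [Real.norm_eq_abs, heq, abs_div, abs_of_pos hxpos, div_le_iff₀ hxpos]
      calc |I1 x - x / c1| ≤ C := h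
        _ ≤ C * x⁻¹ * x := by
            rw [mul_assoc, inv_mul_cancel₀ hxpos.ne', mul_one]
    · simpa using tendsto_inv_atTop_zero.const_mul C
  · rw [← tendsto_sub_nhds_zero_iff]
    apply squeeze_zero_norm' (a := fun x => C * x ^ (-θ))
    · rw [Filter.eventually_atTop]
      exact ⟨R, fun x hx => by simpa [Real.norm_eq_abs] using (key x hx).2⟩
    · simpa using (tendsto_rpow_neg_atTop hθ).const_mul C
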